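/- Let μ be a Borel probability measure on a separable Banach space X and let G₁, G₂ : X → ℝ^d each satisfy Assumption A(L₁, L₂, x₀, R, L₃) with the same constants, with evidence densities π₁ and π₂ respectively. Then there is a finite constant C, depending only on L₁, L₂, L₃, R, x₀, d, Γ and μ (not on the particular maps G₁, G₂), such that ∫_{ℝ^d} π₁(y) log²π₂(y) dy ≤ C. -/

import Mathlib

open MeasureTheory Real Matrix

/-- `‖z‖_Γ² = zᵀ Γ⁻¹ z` for `z ∈ ℝ^d`. -/
noncomputable def normGammaSq {d : ℕ} (Γ : Matrix (Fin d) (Fin d) ℝ) (z : Fin d → ℝ) : ℝ :=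
  z ⬝ᵥ (Γ⁻¹ *ᵥ z)

/-- `‖z‖_Γ = sqrt(zᵀ Γ⁻¹ z)`. -/
noncomputable def normGamma {d : ℕ} (Γ : Matrix (Fin d) (Fin d) ℝ) (z : Fin d → ℝ) : ℝ :=
  Real.sqrt (normGammaSq Γ z)

/-- Gaussian likelihood density
`π(y|x) = (2π)^{-d/2} det(Γ)^{-1/2} exp(-½‖G(x)-y‖_Γ²)`. -/
noncomputable def gaussLikelihood {d : ℕ} (Γ : Matrix (Fin d) (Fin d) ℝ) {X : Type*}
    (G : X → (Fin d → ℝ)) (x : X) (y : Fin d → ℝ) : ℝ :=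
  (Real.sqrt ((2 * Real.pi) ^ d * Γ.det))⁻¹ *
    Real.exp (-(1 / 2) * normGammaSq Γ (G x - y))

/-- Evidence density `π(y) = ∫_X π(y|x) μ(dx)`. -/
noncomputable def evidenceDensity {d : ℕ} (Γ : Matrix (Fin d) (Fin d) ℝ) {X : Type*}
    [MeasurableSpace X] (μ : Measure X) (G : X → (Fin d → ℝ)) (y : Fin d → ℝ) : ℝ :=
  ∫ x, gaussLikelihood Γ G x y ∂μ

/-! The Gaussian normalising constant `Z` bounds every evidence density from above, while the
mass of `B(x₀, R)`, where `‖G₂‖_Γ < L₃`, gives `π₂(y) ≥ Z e^{-(L₃ + ‖y‖_Γ)²/2} μ(B(x₀, R))`;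
hence `|log π₂(y)| ≤ A + ‖y‖_Γ²`. Lipschitz continuity makes `G₁` grow at most linearly,
`‖G₁ x‖_Γ ≤ a + L₁‖x‖`, and the split `‖y‖_Γ² ≤ (1 + s)‖G₁ x - y‖_Γ² + (1 + s⁻¹)‖G₁ x‖_Γ²` with
`s = L₁²/L₂` trades part of the Gaussian decay in `y` for the factor `exp (L₂‖x‖²)`, which is
`μ`-integrable; so `π₁(y) ≤ K e^{-γ‖y‖_Γ²}`. The integrand is then dominated by a multiple of
`e^{-γ‖y‖_Γ²/2}`, which is integrable because `∑ yᵢ² ≤ tr Γ · ‖y‖_Γ²`. None of the constants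
depends on `G₁`, `G₂` beyond `L₁, L₂, L₃, x₀, R`. -/

noncomputable def gaussNormConst {d : ℕ} (Γ : Matrix (Fin d) (Fin d) ℝ) : ℝ :=
  (√((2 * π) ^ d * Γ.det))⁻¹

lemma add_sq_le_one_add_mul_sq {s : ℝ} (hs : 0 < s) (a b : ℝ) :
    (a + b) ^ 2 ≤ (1 + s) * a ^ 2 + (1 + s⁻¹) * b ^ 2 := by
  have hss : s * s⁻¹ = 1 := mul_inv_cancel₀ hs.ne'
  nlinarith [mul_nonneg (inv_nonneg.2 hs.le) (sq_nonneg (s * a - b))]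

lemma sq_add_le_mul_exp (A : ℝ) {γ t : ℝ} (hγ : 0 < γ) (ht : 0 ≤ t) :
    (A + t) ^ 2 ≤ (2 * A ^ 2 + 16 / γ ^ 2) * exp (γ / 2 * t) := by
  have hu : 0 ≤ γ / 2 * t := by positivity
  have ht2 : t ^ 2 ≤ 8 / γ ^ 2 * exp (γ / 2 * t) := by
    rw [div_mul_eq_mul_div, le_div_iff₀ (by positivity)]
    nlinarith [quadratic_le_exp_of_nonneg hu]
  calc (A + t) ^ 2 ≤ 2 * A ^ 2 * 1 + 2 * t ^ 2 := by linarith [add_sq_le (a := A) (b := t)]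
    _ ≤ 2 * A ^ 2 * exp (γ / 2 * t) + 2 * (8 / γ ^ 2 * exp (γ / 2 * t)) := by
        gcongr
        exact one_le_exp hu
    _ = (2 * A ^ 2 + 16 / γ ^ 2) * exp (γ / 2 * t) := by ring

lemma mul_sq_le_mul_exp_neg {p l K A γ t : ℝ} (hp : 0 ≤ p) (hγ : 0 < γ) (ht : 0 ≤ t)
    (hpK : p ≤ K * exp (-(γ * t))) (hl : |l| ≤ A + t) :
    p * l ^ 2 ≤ K * (2 * A ^ 2 + 16 / γ ^ 2) * exp (-(γ / 2 * t)) := by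
  have hl2 : l ^ 2 ≤ (2 * A ^ 2 + 16 / γ ^ 2) * exp (γ / 2 * t) :=
    (sq_le_sq' (abs_le.mp hl).1 (abs_le.mp hl).2).trans (sq_add_le_mul_exp A hγ ht)
  calc p * l ^ 2 ≤ K * exp (-(γ * t)) * ((2 * A ^ 2 + 16 / γ ^ 2) * exp (γ / 2 * t)) :=
        mul_le_mul hpK hl2 (sq_nonneg l) (hp.trans hpK)
    _ = K * (2 * A ^ 2 + 16 / γ ^ 2) * exp (-(γ / 2 * t)) := by
        rw [mul_mul_mul_comm, ← exp_add]; ring_nf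

section GammaNorm

variable {d : ℕ} {Γ : Matrix (Fin d) (Fin d) ℝ}

lemma continuous_normGammaSq : Continuous (normGammaSq Γ) := by
  unfold normGammaSq; fun_prop

lemma normGammaSq_nonneg (hΓ : Γ.PosDef) (z : Fin d → ℝ) : 0 ≤ normGammaSq Γ z := by
  simpa [normGammaSq] using hΓ.inv.posSemidef.re_dotProduct_nonneg z

lemma normGamma_sq (hΓ : Γ.PosDef) (z : Fin d → ℝ) : normGamma Γ z ^ 2 = normGammaSq Γ z :=
  sq_sqrt (normGammaSq_nonneg hΓ z)

/-- `Fin d → ℝ` already carries the sup norm, so the norm induced by `Γ⁻¹` is passed explicitly. -/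
lemma normGamma_eq_norm (hΓ : Γ.PosDef) (z : Fin d → ℝ) :
    normGamma Γ z = @norm _ (Γ⁻¹.toSeminormedAddCommGroup hΓ.inv.posSemidef).toNorm z := by
  rw [normGamma, normGammaSq, dotProduct_comm]
  rfl

lemma inner_eq_dotProduct_inv_mulVec (hΓ : Γ.PosDef) (a b : Fin d → ℝ) :
    @inner ℝ _ (Γ⁻¹.toInnerProductSpace hΓ.inv.posSemidef).toInner a b = a ⬝ᵥ (Γ⁻¹ *ᵥ b) := by
  rw [dotProduct_comm]
  rfl

lemma normGamma_add_le (hΓ : Γ.PosDef) (a b : Fin d → ℝ) :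
    normGamma Γ (a + b) ≤ normGamma Γ a + normGamma Γ b := by
  simp only [normGamma_eq_norm hΓ]
  exact @norm_add_le _ (Γ⁻¹.toSeminormedAddCommGroup hΓ.inv.posSemidef).toSeminormedAddGroup a b

lemma normGamma_sub_le (hΓ : Γ.PosDef) (a b : Fin d → ℝ) :
    normGamma Γ (a - b) ≤ normGamma Γ a + normGamma Γ b := by
  simp only [normGamma_eq_norm hΓ]
  exact @norm_sub_le _ (Γ⁻¹.toSeminormedAddCommGroup hΓ.inv.posSemidef).toSeminormedAddGroup a b

lemma normGammaSq_sub_comm (a b : Fin d → ℝ) : normGammaSq Γ (a - b) = normGammaSq Γ (b - a) := by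
  rw [← neg_sub, normGammaSq, mulVec_neg, neg_dotProduct, dotProduct_neg, neg_neg]
  rfl

lemma normGammaSq_add_le (hΓ : Γ.PosDef) {s : ℝ} (hs : 0 < s) (a b : Fin d → ℝ) :
    normGammaSq Γ (a + b) ≤ (1 + s) * normGammaSq Γ a + (1 + s⁻¹) * normGammaSq Γ b := by
  simp only [← normGamma_sq hΓ]
  calc normGamma Γ (a + b) ^ 2 ≤ (normGamma Γ a + normGamma Γ b) ^ 2 :=
        pow_le_pow_left₀ (sqrt_nonneg _) (normGamma_add_le hΓ a b) 2
    _ ≤ _ := add_sq_le_one_add_mul_sq hs _ _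

lemma neg_half_normGammaSq_sub_le (hΓ : Γ.PosDef) {s : ℝ} (hs : 0 < s) (g y : Fin d → ℝ) :
    -(1 / 2) * normGammaSq Γ (g - y)
      ≤ normGammaSq Γ g / (2 * s) - normGammaSq Γ y / (2 * (1 + s)) := by
  have h := normGammaSq_add_le hΓ hs (y - g) g
  rw [sub_add_cancel, normGammaSq_sub_comm] at h
  have key : normGammaSq Γ y / (2 * (1 + s))
      ≤ normGammaSq Γ (g - y) / 2 + normGammaSq Γ g / (2 * s) :=
    calc normGammaSq Γ y / (2 * (1 + s))
        ≤ ((1 + s) * normGammaSq Γ (g - y) + (1 + s⁻¹) * normGammaSq Γ g) / (2 * (1 + s)) := by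
          gcongr
      _ = normGammaSq Γ (g - y) / 2 + normGammaSq Γ g / (2 * s) := by
          field_simp
          ring
  linarith

/-- In the `Γ⁻¹`-inner product, `z i = ⟪z, Γ eᵢ⟫` and `‖Γ eᵢ‖² = Γ i i`. -/
lemma sq_apply_le_mul_normGammaSq (hΓ : Γ.PosDef) (z : Fin d → ℝ) (i : Fin d) :
    z i ^ 2 ≤ Γ i i * normGammaSq Γ z := by
  have hinv : Γ⁻¹ * Γ = 1 := nonsing_inv_mul Γ hΓ.det_pos.ne'.isUnit
  have hCS := @real_inner_mul_inner_self_le _ (Γ⁻¹.toSeminormedAddCommGroup hΓ.inv.posSemidef)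
    (Γ⁻¹.toInnerProductSpace hΓ.inv.posSemidef) z (Γ *ᵥ Pi.single i 1)
  simp only [inner_eq_dotProduct_inv_mulVec hΓ, mulVec_mulVec, hinv, one_mulVec,
    dotProduct_single, mul_one] at hCS
  simpa [sq, normGammaSq, mul_comm] using hCS

lemma sum_sq_le_trace_mul_normGammaSq (hΓ : Γ.PosDef) (z : Fin d → ℝ) :
    ∑ i, z i ^ 2 ≤ Γ.trace * normGammaSq Γ z := by
  rw [trace, Finset.sum_mul]
  exact Finset.sum_le_sum fun i _ => sq_apply_le_mul_normGammaSq hΓ z i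

lemma integrable_exp_neg_mul_normGammaSq (hΓ : Γ.PosDef) {c : ℝ} (hc : 0 < c) :
    Integrable (fun y => exp (-(c * normGammaSq Γ y))) := by
  set T := Γ.trace + 1 -- positive also when `d = 0`
  have hT : 0 < T := by have := hΓ.posSemidef.trace_nonneg; positivity
  have hprod : Integrable (fun y : Fin d → ℝ => ∏ i, exp (-(c / T) * y i ^ 2)) :=
    Integrable.fintype_prod fun _ => integrable_exp_neg_mul_sq (by positivity)
  refine hprod.mono' (continuous_normGammaSq.const_mul c).neg.rexp.aestronglyMeasurable
    (ae_of_all _ fun y => ?_)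
  rw [← exp_sum, norm_of_nonneg (exp_pos _).le, exp_le_exp, ← Finset.mul_sum, neg_mul,
    neg_le_neg_iff, div_mul_eq_mul_div, div_le_iff₀ hT]
  have := sum_sq_le_trace_mul_normGammaSq hΓ y
  nlinarith [normGammaSq_nonneg hΓ y]

end GammaNorm

section Likelihood

variable {d : ℕ} {Γ : Matrix (Fin d) (Fin d) ℝ} {X : Type*} {G : X → Fin d → ℝ} {x : X}
  {y : Fin d → ℝ}

lemma gaussNormConst_pos (hΓ : Γ.PosDef) : 0 < gaussNormConst Γ := by
  unfold gaussNormConst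
  have := hΓ.det_pos
  positivity

lemma gaussLikelihood_eq :
    gaussLikelihood Γ G x y = gaussNormConst Γ * exp (-(1 / 2) * normGammaSq Γ (G x - y)) :=
  rfl

lemma gaussLikelihood_nonneg : 0 ≤ gaussLikelihood Γ G x y := by
  unfold gaussLikelihood
  positivity

lemma gaussLikelihood_le (hΓ : Γ.PosDef) : gaussLikelihood Γ G x y ≤ gaussNormConst Γ := by
  rw [gaussLikelihood_eq]
  refine mul_le_of_le_one_right (gaussNormConst_pos hΓ).le (exp_le_one_iff.mpr ?_)
  nlinarith [normGammaSq_nonneg hΓ (G x - y)]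

lemma gaussLikelihood_le_mul_exp [Norm X] (hΓ : Γ.PosDef) {a b L₂ : ℝ} (hb : 0 < b)
    (hL₂ : 0 < L₂) (hGx : normGamma Γ (G x) ≤ a + b * ‖x‖) :
    gaussLikelihood Γ G x y ≤ gaussNormConst Γ * exp (L₂ * a ^ 2 / b ^ 2) * exp (L₂ * ‖x‖ ^ 2)
      * exp (-((2 * (1 + b ^ 2 / L₂))⁻¹ * normGammaSq Γ y)) := by
  have hs : 0 < b ^ 2 / L₂ := by positivity
  have hGsq : normGammaSq Γ (G x) ≤ 2 * a ^ 2 + 2 * (b ^ 2 * ‖x‖ ^ 2) :=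
    calc normGammaSq Γ (G x) = normGamma Γ (G x) ^ 2 := (normGamma_sq hΓ _).symm
      _ ≤ (a + b * ‖x‖) ^ 2 := pow_le_pow_left₀ (sqrt_nonneg _) hGx 2
      _ ≤ 2 * (a ^ 2 + (b * ‖x‖) ^ 2) := add_sq_le
      _ = 2 * a ^ 2 + 2 * (b ^ 2 * ‖x‖ ^ 2) := by ring
  have hGs : normGammaSq Γ (G x) / (2 * (b ^ 2 / L₂)) ≤ L₂ * a ^ 2 / b ^ 2 + L₂ * ‖x‖ ^ 2 :=
    calc normGammaSq Γ (G x) / (2 * (b ^ 2 / L₂))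
        ≤ (2 * a ^ 2 + 2 * (b ^ 2 * ‖x‖ ^ 2)) / (2 * (b ^ 2 / L₂)) := by gcongr
      _ = L₂ * a ^ 2 / b ^ 2 + L₂ * ‖x‖ ^ 2 := by
          field_simp
  have hsplit := neg_half_normGammaSq_sub_le hΓ hs (G x) y
  rw [gaussLikelihood_eq, mul_assoc (gaussNormConst Γ * _), mul_assoc (gaussNormConst Γ),
    ← exp_add, ← exp_add]
  refine mul_le_mul_of_nonneg_left (exp_le_exp.mpr ?_) (gaussNormConst_pos hΓ).le
  rw [div_eq_inv_mul (normGammaSq Γ y)] at hsplit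
  linarith

lemma normGamma_le_of_lipschitz [SeminormedAddGroup X] (hΓ : Γ.PosDef) {L c : ℝ} (hL : 0 ≤ L)
    (hLip : ∀ x x', normGamma Γ (G x - G x') ≤ L * ‖x - x'‖) {x₀ : X}
    (h₀ : normGamma Γ (G x₀) ≤ c) (x : X) :
    normGamma Γ (G x) ≤ (c + L * ‖x₀‖) + L * ‖x‖ :=
  calc normGamma Γ (G x) = normGamma Γ ((G x - G x₀) + G x₀) := by rw [sub_add_cancel]
    _ ≤ L * ‖x - x₀‖ + c := (normGamma_add_le hΓ _ _).trans (add_le_add (hLip x x₀) h₀)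
    _ ≤ (c + L * ‖x₀‖) + L * ‖x‖ := by nlinarith [norm_sub_le x x₀]

variable [MeasurableSpace X] {μ : Measure X}

lemma measurable_gaussLikelihood (hG : Measurable G) :
    Measurable fun x => gaussLikelihood Γ G x y :=
  ((continuous_normGammaSq.measurable.comp (hG.sub_const y)).const_mul _).exp.const_mul _

lemma integrable_gaussLikelihood [IsFiniteMeasure μ] (hΓ : Γ.PosDef) (hG : Measurable G) :
    Integrable (fun x => gaussLikelihood Γ G x y) μ :=
  (integrable_const (gaussNormConst Γ)).mono' (measurable_gaussLikelihood hG).aestronglyMeasurable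
    (ae_of_all _ fun _ => by
      rw [norm_of_nonneg gaussLikelihood_nonneg]
      exact gaussLikelihood_le hΓ)

lemma evidenceDensity_nonneg : 0 ≤ evidenceDensity Γ μ G y :=
  integral_nonneg fun _ => gaussLikelihood_nonneg

lemma evidenceDensity_le [IsProbabilityMeasure μ] (hΓ : Γ.PosDef) (hG : Measurable G) :
    evidenceDensity Γ μ G y ≤ gaussNormConst Γ := by
  calc evidenceDensity Γ μ G y ≤ ∫ _, gaussNormConst Γ ∂μ :=
        integral_mono (integrable_gaussLikelihood hΓ hG) (integrable_const _)
          fun _ => gaussLikelihood_le hΓ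
    _ = gaussNormConst Γ := by simp

lemma mul_measureReal_le_evidenceDensity [IsFiniteMeasure μ] (hΓ : Γ.PosDef) (hG : Measurable G)
    {S : Set X} (hS : MeasurableSet S) {L : ℝ} (hGS : ∀ x ∈ S, normGamma Γ (G x) ≤ L) :
    gaussNormConst Γ * exp (-(1 / 2) * (L + normGamma Γ y) ^ 2) * μ.real S
      ≤ evidenceDensity Γ μ G y := by
  have hS_le : ∀ x ∈ S, gaussNormConst Γ * exp (-(1 / 2) * (L + normGamma Γ y) ^ 2)
      ≤ gaussLikelihood Γ G x y := by
    intro x hx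
    have hdist : normGamma Γ (G x - y) ≤ L + normGamma Γ y :=
      (normGamma_sub_le hΓ _ _).trans (by linarith [hGS x hx])
    have hsq : normGammaSq Γ (G x - y) ≤ (L + normGamma Γ y) ^ 2 := by
      rw [← normGamma_sq hΓ]
      exact pow_le_pow_left₀ (sqrt_nonneg _) hdist 2
    rw [gaussLikelihood_eq]
    exact mul_le_mul_of_nonneg_left (exp_le_exp.mpr (by linarith)) (gaussNormConst_pos hΓ).le
  calc _ ≤ ∫ x in S, gaussLikelihood Γ G x y ∂μ :=
        setIntegral_ge_of_const_le_real hS (measure_ne_top μ S) hS_le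
          (integrable_gaussLikelihood hΓ hG).integrableOn
    _ ≤ evidenceDensity Γ μ G y :=
        setIntegral_le_integral (integrable_gaussLikelihood hΓ hG)
          (ae_of_all _ fun _ => gaussLikelihood_nonneg)

lemma abs_log_evidenceDensity_le [IsProbabilityMeasure μ] (hΓ : Γ.PosDef) (hG : Measurable G)
    {S : Set X} (hS : MeasurableSet S) (hμS : 0 < μ S) {L : ℝ}
    (hGS : ∀ x ∈ S, normGamma Γ (G x) ≤ L) :
    |log (evidenceDensity Γ μ G y)|
      ≤ |log (gaussNormConst Γ)| - log (μ.real S) + L ^ 2 + normGammaSq Γ y := by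
  have hM := gaussNormConst_pos hΓ
  have hm : 0 < μ.real S := ENNReal.toReal_pos hμS.ne' (measure_ne_top μ S)
  have hlog_m : log (μ.real S) ≤ 0 := log_nonpos hm.le (measureReal_le_one (μ := μ) (s := S))
  have hlow := mul_measureReal_le_evidenceDensity (μ := μ) (y := y) hΓ hG hS hGS
  have hlog_low := log_le_log (by positivity) hlow
  rw [log_mul (by positivity) hm.ne', log_mul hM.ne' (exp_pos _).ne', log_exp] at hlog_low
  have hlog_up := log_le_log (hlow.trans_lt' (by positivity)) (evidenceDensity_le hΓ hG (y := y))
  rw [← normGamma_sq hΓ, abs_le]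
  constructor
  · nlinarith [neg_abs_le (log (gaussNormConst Γ)), sq_nonneg (L - normGamma Γ y)]
  · nlinarith [le_abs_self (log (gaussNormConst Γ)), sq_nonneg L, sq_nonneg (normGamma Γ y)]

lemma evidenceDensity_le_mul_exp [Norm X] (hΓ : Γ.PosDef) {a b L₂ : ℝ} (hb : 0 < b)
    (hL₂ : 0 < L₂) (hint : Integrable (fun x => exp (L₂ * ‖x‖ ^ 2)) μ)
    (hGx : ∀ x, normGamma Γ (G x) ≤ a + b * ‖x‖) :
    evidenceDensity Γ μ G y ≤ gaussNormConst Γ * exp (L₂ * a ^ 2 / b ^ 2)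
      * (∫ x, exp (L₂ * ‖x‖ ^ 2) ∂μ) * exp (-((2 * (1 + b ^ 2 / L₂))⁻¹ * normGammaSq Γ y)) := by
  calc evidenceDensity Γ μ G y
      ≤ ∫ x, gaussNormConst Γ * exp (L₂ * a ^ 2 / b ^ 2) * exp (L₂ * ‖x‖ ^ 2)
          * exp (-((2 * (1 + b ^ 2 / L₂))⁻¹ * normGammaSq Γ y)) ∂μ :=
        integral_mono_of_nonneg (ae_of_all _ fun _ => gaussLikelihood_nonneg)
          ((hint.const_mul _).mul_const _)
          (ae_of_all _ fun x => gaussLikelihood_le_mul_exp hΓ hb hL₂ (hGx x))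
    _ = _ := by rw [integral_mul_const, integral_const_mul]

end Likelihood

theorem evidence_squared_log_moment_uniform_bound_general {d : ℕ}
    {X : Type*} [NormedAddCommGroup X]
    [MeasurableSpace X] [BorelSpace X]
    (μ : Measure X) [IsProbabilityMeasure μ]
    (Γ : Matrix (Fin d) (Fin d) ℝ) (hΓ_pd : Γ.PosDef)
    (L₁ L₂ R L₃ : ℝ) (x₀ : X)
    (hL₁ : 0 < L₁) (hL₂ : 0 < L₂) (hR : 0 < R)
    (hSubGauss : Integrable (fun x => Real.exp (L₂ * ‖x‖ ^ 2)) μ)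
    (hBall : 0 < μ (Metric.ball x₀ R)) :
    ∃ C : ℝ, ∀ G₁ G₂ : X → (Fin d → ℝ),
      Measurable G₁ → Measurable G₂ →
      (∀ x x' : X, normGamma Γ (G₁ x - G₁ x') ≤ L₁ * ‖x - x'‖) →
      (∀ x x' : X, normGamma Γ (G₂ x - G₂ x') ≤ L₁ * ‖x - x'‖) →
      (∀ x ∈ Metric.ball x₀ R, normGamma Γ (G₁ x) < L₃) →
      (∀ x ∈ Metric.ball x₀ R, normGamma Γ (G₂ x) < L₃) →
      ∫ y, evidenceDensity Γ μ G₁ y * (Real.log (evidenceDensity Γ μ G₂ y)) ^ 2 ≤ C := by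
  set γ := (2 * (1 + L₁ ^ 2 / L₂))⁻¹
  set K := gaussNormConst Γ * exp (L₂ * (L₃ + L₁ * ‖x₀‖) ^ 2 / L₁ ^ 2)
    * ∫ x, exp (L₂ * ‖x‖ ^ 2) ∂μ
  set A := |log (gaussNormConst Γ)| - log (μ.real (Metric.ball x₀ R)) + L₃ ^ 2
  have hγ : 0 < γ := by positivity
  refine ⟨∫ y, K * (2 * A ^ 2 + 16 / γ ^ 2) * exp (-(γ / 2 * normGammaSq Γ y)), ?_⟩
  intro G₁ G₂ hG₁ hG₂ hLip₁ _ hB₁ hB₂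
  have hGrowth₁ : ∀ x, normGamma Γ (G₁ x) ≤ (L₃ + L₁ * ‖x₀‖) + L₁ * ‖x‖ :=
    normGamma_le_of_lipschitz hΓ_pd hL₁.le hLip₁ (hB₁ x₀ (Metric.mem_ball_self hR)).le
  refine integral_mono_of_nonneg
    (ae_of_all _ fun _ => mul_nonneg evidenceDensity_nonneg (sq_nonneg _))
    ((integrable_exp_neg_mul_normGammaSq hΓ_pd (by positivity)).const_mul _)
    (ae_of_all _ fun y => ?_)
  exact mul_sq_le_mul_exp_neg evidenceDensity_nonneg hγ (normGammaSq_nonneg hΓ_pd y)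
    (evidenceDensity_le_mul_exp hΓ_pd hL₁ hL₂ hSubGauss hGrowth₁)
    (abs_log_evidenceDensity_le hΓ_pd hG₂ measurableSet_ball hBall fun x hx => (hB₂ x hx).le)

/-- There is a finite constant `C`, depending only on the constants in
Assumption A, on `d`, `Γ` and `μ` (but not on the particular forward maps), such that
`∫ π₁(y) log²π₂(y) dy ≤ C` whenever `π₁, π₂` are evidence densities of maps `G₁, G₂`
each satisfying Assumption A with those constants. -/
theorem evidence_squared_log_moment_uniform_bound {d : ℕ}
    {X : Type*} [NormedAddCommGroup X] [NormedSpace ℝ X] [CompleteSpace X]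
    [TopologicalSpace.SeparableSpace X] [MeasurableSpace X] [BorelSpace X]
    (μ : Measure X) [IsProbabilityMeasure μ]
    (Γ : Matrix (Fin d) (Fin d) ℝ) (hΓ_symm : Γ.IsSymm) (hΓ_pd : Γ.PosDef)
    (L₁ L₂ R L₃ : ℝ) (x₀ : X)
    (hL₁ : 0 < L₁) (hL₂ : 0 < L₂) (hR : 0 < R) (hL₃ : 0 < L₃)
    (hSubGauss : Integrable (fun x => Real.exp (L₂ * ‖x‖ ^ 2)) μ)
    (hBall : 0 < μ (Metric.ball x₀ R)) :
    ∃ C : ℝ, ∀ G₁ G₂ : X → (Fin d → ℝ),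
      Measurable G₁ → Measurable G₂ →
      (∀ x x' : X, normGamma Γ (G₁ x - G₁ x') ≤ L₁ * ‖x - x'‖) →
      (∀ x x' : X, normGamma Γ (G₂ x - G₂ x') ≤ L₁ * ‖x - x'‖) →
      (∀ x ∈ Metric.ball x₀ R, normGamma Γ (G₁ x) < L₃) →
      (∀ x ∈ Metric.ball x₀ R, normGamma Γ (G₂ x) < L₃) →
      ∫ y, evidenceDensity Γ μ G₁ y * (Real.log (evidenceDensity Γ μ G₂ y)) ^ 2 ≤ C :=
  evidence_squared_log_moment_uniform_bound_general μ Γ hΓ_pd L₁ L₂ R L₃ x₀ hL₁ hL₂ hR hSubGauss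
    hBall
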